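/- Fix integers k ≥ 1 and c ≥ 1 and set α_pat(k) = 100·2^{ck} and α_long(k) = 10^4·2^{ck}. Let H be a graph, Z a set of vertices of H, R a Steiner tree for Z in H, and P a long maximal degree-2 path of R with endpoints u and v. Let S_u ⊆ V(H) \ (A_{R,P,u} ∪ B_{R,P,u}) be a set that separates A_{R,P,u} from B_{R,P,u} in H, and let S_v ⊆ V(H) \ (A_{R,P,v} ∪ B_{R,P,v}) be a set that separates A_{R,P,v} from B_{R,P,v} in H. Then there exist vertices u' ∈ S_u ∩ V(P) and v' ∈ S_v ∩ V(P) such that: (1) the subpath P_{u,u'} of P with endpoints u and u' has no internal vertex from S_u ∪ S_v, and α_pat(k)/2 ≤ |V(P_{u,u'})| ≤ α_pat(k); (2) the subpath P_{v,v'} of P with endpoints v and v' has no internal vertex from S_u ∪ S_v, and α_pat(k)/2 ≤ |V(P_{v,v'})| ≤ α_pat(k); and (3) letting P_{u',v'} be the subpath of P with endpoints u' and v', P is the concatenation P_{u,u'} − P_{u',v'} − P_{v',v}, with V(P_{u,u'}) ∩ V(P_{u',v'}) = {u'}, V(P_{v,v'}) ∩ V(P_{u',v'}) = {v'}, and V(P_{u,u'})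 ∩ V(P_{v,v'}) = ∅. -/

import Mathlib

open SimpleGraph

/-- The degree of a vertex in a subgraph: the number of its neighbours in the subgraph. -/
noncomputable def degN {V : Type*} {H : SimpleGraph V} (R : H.Subgraph) (v : V) : ℕ :=
  (R.neighborSet v).ncard

/-- `R` is a Steiner tree for `Z` in `H`: a subtree of `H` whose set of leaves
(vertices of degree exactly `1`) is exactly `Z`. -/
def IsSteinerTree {V : Type*} (H : SimpleGraph V) (Z : Set V) (R : H.Subgraph) : Prop :=
  R.coe.IsTree ∧ {v : V | degN R v = 1} = Z

/-- For a walk `Q` (a long maximal degree-2 path of `R`, oriented away from its endpoint `u`)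
and `n` (= `α_pat(k)`), this is the set `A_{R,Q,u}`: the union of the set of the `n / 2`
vertices of `Q` closest to `u` (the vertex set of `P''_u`) with the vertex set of the
connected component of `R − (V(P'_u) \ {u})` containing `u`, where `P'_u` consists of the
`n` vertices of `Q` closest to `u`. -/
def sideA {V : Type*} (H : SimpleGraph V) (R : H.Subgraph) {u v : V}
    (Q : H.Walk u v) (n : ℕ) : Set V :=
  {w : V | w ∈ Q.support.take (n / 2)} ∪
  {w : V | ∃ (hw : w ∈ (R.deleteVerts ({x : V | x ∈ Q.support.take n} \ {u})).verts)
      (hu : u ∈ (R.deleteVerts ({x : V | x ∈ Q.support.take n} \ {u})).verts),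
      (R.deleteVerts ({x : V | x ∈ Q.support.take n} \ {u})).coe.Reachable ⟨w, hw⟩ ⟨u, hu⟩}

/-- The set `B_{R,Q,u} = V(R) \ (A_{R,Q,u} ∪ V(P'_u))`. -/
def sideB {V : Type*} (H : SimpleGraph V) (R : H.Subgraph) {u v : V}
    (Q : H.Walk u v) (n : ℕ) : Set V :=
  R.verts \ (sideA H R Q n ∪ {w : V | w ∈ Q.support.take n})

/-- `S` separates `A` from `B` in `H`: every walk of `H` from `A` to `B` meets `S`
(equivalently, `H − S` has no path with one endpoint in `A` and one endpoint in `B`). -/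
def Separates {V : Type*} (H : SimpleGraph V) (A B S : Set V) : Prop :=
  ∀ (x y : V) (W : H.Walk x y), x ∈ A → y ∈ B → ∃ w ∈ W.support, w ∈ S

/-! A vertex of `P` that lies in a separator `S_u` sits at a position in `[α_pat/2, α_pat)`
counted from `u`: the first `α_pat/2` vertices of `P` belong to `A_{R,P,u}`, and a vertex `w`
further than `α_pat` from `u` belongs to `B_{R,P,u}`, because in the tree `R` the only
`u`–`w` path is the subpath of `P`, which runs through the deleted set `V(P'_u) \ {u}`.
Since `S_u` separates `u ∈ A` from the `α_pat`-th vertex of `P`, which lies in `B`, the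
separator meets `P`. The same holds for `S_v` from the other end. Take `u'` to be the first
vertex of `S_u` and `v'` the last vertex of `S_v` on `P`; as `P` is long, the two windows are
far apart, and the three subpaths `P_{u,u'}`, `P_{u',v'}`, `P_{v',v}` have the required
properties. -/

namespace List

variable {α : Type*} [DecidableEq α] {l : List α} {a : α} {k : ℕ}

theorem Nodup.mem_drop_iff_le_idxOf (hl : l.Nodup) (ha : a ∈ l) :
    a ∈ l.drop k ↔ k ≤ l.idxOf a := by
  rw [← not_lt, ← mem_take_iff_idxOf_lt ha]
  refine ⟨fun hd ht => disjoint_take_drop hl le_rfl ht hd, fun h => ?_⟩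
  rw [← take_append_drop k l, mem_append] at ha
  exact ha.resolve_left h

theorem Nodup.idxOf_drop_add (hl : l.Nodup) (ha : a ∈ l.drop k) :
    (l.drop k).idxOf a + k = l.idxOf a := by
  have hk : k ≤ l.length := by
    by_contra! h
    simp [drop_of_length_le h.le] at ha
  have hnt : a ∉ l.take k := fun ht => disjoint_take_drop hl le_rfl ht ha
  conv_rhs => rw [← take_append_drop k l]
  rw [idxOf_append_of_notMem hnt, length_take_of_le hk, Nat.add_comm]

theorem Nodup.idxOf_reverse_add (hl : l.Nodup) (ha : a ∈ l) :
    l.reverse.idxOf a + l.idxOf a + 1 = l.length := by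
  have hi := idxOf_lt_length_of_mem ha
  have hj : l.length - 1 - l.idxOf a < l.reverse.length := by rw [length_reverse]; omega
  have hget : l.reverse[l.length - 1 - l.idxOf a] = a := by
    rw [getElem_reverse]
    simp only [show l.length - 1 - (l.length - 1 - l.idxOf a) = l.idxOf a by omega]
    exact getElem_idxOf hi
  have := (nodup_reverse.mpr hl).idxOf_getElem _ hj
  rw [hget] at this
  omega

end List

namespace SimpleGraph.Walk

variable {V : Type*} [DecidableEq V] {G : SimpleGraph V} {u v w x y : V} {p : G.Walk u v}

theorem idxOf_start_support (p : G.Walk u v) : p.support.idxOf u = 0 := by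
  rw [← p.cons_tail_support, List.idxOf_cons_self]

theorem support_takeUntil_eq_take (p : G.Walk u v) (h : x ∈ p.support) :
    (p.takeUntil x h).support = p.support.take (p.support.idxOf x + 1) := by
  rw [takeUntil_eq_take, support_copy, support_take]

theorem support_dropUntil_eq_drop (p : G.Walk u v) (h : x ∈ p.support) :
    (p.dropUntil x h).support = p.support.drop (p.support.idxOf x) := by
  rw [dropUntil_eq_drop, support_copy, drop_support_eq_support_drop_min,
    min_eq_left (p.length_takeUntil h ▸ p.length_takeUntil_le_length h)]

theorem mem_support_takeUntil_iff (h : x ∈ p.support) :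
    w ∈ (p.takeUntil x h).support ↔ w ∈ p.support ∧ p.support.idxOf w ≤ p.support.idxOf x := by
  rw [support_takeUntil_eq_take]
  refine ⟨fun hw => ?_, fun ⟨hw, hle⟩ => (List.mem_take_iff_idxOf_lt hw).mpr (by omega)⟩
  have hw' := List.take_subset _ _ hw
  exact ⟨hw', by have := (List.mem_take_iff_idxOf_lt hw').mp hw; omega⟩

theorem IsPath.mem_support_dropUntil_iff (hp : p.IsPath) (h : x ∈ p.support) :
    w ∈ (p.dropUntil x h).support ↔ w ∈ p.support ∧ p.support.idxOf x ≤ p.support.idxOf w := by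
  rw [support_dropUntil_eq_drop]
  exact ⟨fun hw => ⟨List.drop_subset _ _ hw,
      (hp.support_nodup.mem_drop_iff_le_idxOf (List.drop_subset _ _ hw)).mp hw⟩,
    fun ⟨hw, hle⟩ => (hp.support_nodup.mem_drop_iff_le_idxOf hw).mpr hle⟩

theorem IsPath.idxOf_support_dropUntil_add (hp : p.IsPath) (h : x ∈ p.support)
    (hw : w ∈ (p.dropUntil x h).support) :
    (p.dropUntil x h).support.idxOf w + p.support.idxOf x = p.support.idxOf w := by
  rw [support_dropUntil_eq_drop] at hw ⊢
  exact hp.support_nodup.idxOf_drop_add hw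

theorem IsPath.idxOf_support_reverse_add (hp : p.IsPath) (hw : w ∈ p.support) :
    p.reverse.support.idxOf w + p.support.idxOf w = p.length := by
  have := hp.support_nodup.idxOf_reverse_add hw
  rw [length_support] at this
  rw [support_reverse]
  omega

theorem IsPath.mem_support_dropUntil_takeUntil (hp : p.IsPath) (hx : x ∈ p.support)
    (hy : y ∈ (p.dropUntil x hx).support) (hw : w ∈ ((p.dropUntil x hx).takeUntil y hy).support) :
    w ∈ p.support ∧ p.support.idxOf x ≤ p.support.idxOf w ∧
      p.support.idxOf w ≤ p.support.idxOf y := by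
  obtain ⟨hwD, hle⟩ := (mem_support_takeUntil_iff hy).mp hw
  have := hp.idxOf_support_dropUntil_add hx hwD
  have := hp.idxOf_support_dropUntil_add hx hy
  obtain ⟨hwp, hxw⟩ := (hp.mem_support_dropUntil_iff hx).mp hwD
  exact ⟨hwp, hxw, by omega⟩

theorem IsPath.mem_support_dropUntil_dropUntil (hp : p.IsPath) (hx : x ∈ p.support)
    (hy : y ∈ (p.dropUntil x hx).support) (hw : w ∈ ((p.dropUntil x hx).dropUntil y hy).support) :
    w ∈ p.support ∧ p.support.idxOf y ≤ p.support.idxOf w := by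
  obtain ⟨hwD, hle⟩ := ((hp.dropUntil hx).mem_support_dropUntil_iff hy).mp hw
  have := hp.idxOf_support_dropUntil_add hx hwD
  have := hp.idxOf_support_dropUntil_add hx hy
  exact ⟨((hp.mem_support_dropUntil_iff hx).mp hwD).1, by omega⟩

theorem IsPath.length_dropUntil_dropUntil (hp : p.IsPath) (hx : x ∈ p.support)
    (hy : y ∈ (p.dropUntil x hx).support) :
    ((p.dropUntil x hx).dropUntil y hy).length = p.length - p.support.idxOf y := by
  have := hp.idxOf_support_dropUntil_add hx hy
  have := p.length_takeUntil_le_length hx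
  have := p.length_takeUntil hx
  rw [length_dropUntil, length_dropUntil]
  omega

theorem IsPath.support_takeUntil_inter_support_dropUntil_takeUntil (hp : p.IsPath)
    (hx : x ∈ p.support) (hy : y ∈ (p.dropUntil x hx).support) :
    {w | w ∈ (p.takeUntil x hx).support} ∩
      {w | w ∈ ((p.dropUntil x hx).takeUntil y hy).support} = {x} := by
  ext w
  refine ⟨fun ⟨hwT, hwM⟩ => ?_, fun hw => ?_⟩
  · obtain ⟨hwp, hle⟩ := (mem_support_takeUntil_iff hx).mp hwT
    have := (hp.mem_support_dropUntil_takeUntil hx hy hwM).2.1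
    exact (List.idxOf_inj hwp).mp (by omega)
  · rw [Set.mem_singleton_iff.mp hw]
    exact ⟨end_mem_support _, start_mem_support _⟩

theorem IsPath.support_dropUntil_dropUntil_inter_support_dropUntil_takeUntil (hp : p.IsPath)
    (hx : x ∈ p.support) (hy : y ∈ (p.dropUntil x hx).support) :
    {w | w ∈ ((p.dropUntil x hx).dropUntil y hy).support} ∩
      {w | w ∈ ((p.dropUntil x hx).takeUntil y hy).support} = {y} := by
  ext w
  refine ⟨fun ⟨hwE, hwM⟩ => ?_, fun hw => ?_⟩
  · obtain ⟨hwp, hge⟩ := hp.mem_support_dropUntil_dropUntil hx hy hwE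
    have := (hp.mem_support_dropUntil_takeUntil hx hy hwM).2.2
    exact (List.idxOf_inj hwp).mp (by omega)
  · rw [Set.mem_singleton_iff.mp hw]
    exact ⟨start_mem_support _, end_mem_support _⟩

theorem IsPath.support_takeUntil_inter_support_dropUntil_dropUntil (hp : p.IsPath)
    (hx : x ∈ p.support) (hy : y ∈ (p.dropUntil x hx).support)
    (hxy : p.support.idxOf x < p.support.idxOf y) :
    {w | w ∈ (p.takeUntil x hx).support} ∩
      {w | w ∈ ((p.dropUntil x hx).dropUntil y hy).support} = ∅ := by
  refine Set.eq_empty_of_forall_notMem fun w ⟨hwT, hwE⟩ => ?_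
  have := ((mem_support_takeUntil_iff hx).mp hwT).2
  have := (hp.mem_support_dropUntil_dropUntil hx hy hwE).2
  omega

theorem IsPath.exists_three_parts (hp : p.IsPath) {Su Sv : Set V} {lo hi : ℕ}
    (hSu : ∀ w ∈ p.support, w ∈ Su → lo ≤ p.support.idxOf w + 1 ∧ p.support.idxOf w + 1 ≤ hi)
    (hSv : ∀ w ∈ p.support, w ∈ Sv →
      lo ≤ p.reverse.support.idxOf w + 1 ∧ p.reverse.support.idxOf w + 1 ≤ hi)
    (hhi : 2 * hi ≤ p.length) (hSu_ne : ∃ w ∈ p.support, w ∈ Su)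
    (hSv_ne : ∃ w ∈ p.support, w ∈ Sv) :
    ∃ (u' v' : V) (h1 : u' ∈ p.support) (h2 : v' ∈ (p.dropUntil u' h1).support),
      u' ∈ Su ∧ v' ∈ Sv ∧
      (∀ w ∈ (p.takeUntil u' h1).support, w ≠ u → w ≠ u' → w ∉ Su ∪ Sv) ∧
      lo ≤ (p.takeUntil u' h1).length + 1 ∧
      (p.takeUntil u' h1).length + 1 ≤ hi ∧
      (∀ w ∈ ((p.dropUntil u' h1).dropUntil v' h2).support,
        w ≠ v' → w ≠ v → w ∉ Su ∪ Sv) ∧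
      lo ≤ ((p.dropUntil u' h1).dropUntil v' h2).length + 1 ∧
      ((p.dropUntil u' h1).dropUntil v' h2).length + 1 ≤ hi ∧
      p = ((p.takeUntil u' h1).append
            ((p.dropUntil u' h1).takeUntil v' h2)).append
            ((p.dropUntil u' h1).dropUntil v' h2) ∧
      {w : V | w ∈ (p.takeUntil u' h1).support} ∩
        {w : V | w ∈ ((p.dropUntil u' h1).takeUntil v' h2).support} = {u'} ∧
      {w : V | w ∈ ((p.dropUntil u' h1).dropUntil v' h2).support} ∩
        {w : V | w ∈ ((p.dropUntil u' h1).takeUntil v' h2).support} = {v'} ∧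
      {w : V | w ∈ (p.takeUntil u' h1).support} ∩
        {w : V | w ∈ ((p.dropUntil u' h1).dropUntil v' h2).support} = ∅ := by
  have hfin (S : Set V) : {w | w ∈ p.support ∧ w ∈ S}.Finite :=
    p.support.finite_toSet.subset fun _ hw => hw.1
  obtain ⟨u', ⟨h1, hu'⟩, hu'_min⟩ := Set.exists_min_image _ (p.support.idxOf ·) (hfin Su) hSu_ne
  obtain ⟨v', ⟨hv'p, hv'⟩, hv'_max⟩ := Set.exists_max_image _ (p.support.idxOf ·) (hfin Sv) hSv_ne
  have hSv' : ∀ w ∈ p.support, w ∈ Sv →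
      p.length + 1 ≤ p.support.idxOf w + hi ∧ p.support.idxOf w + lo ≤ p.length + 1 := by
    intro w hw hwS
    have := hp.idxOf_support_reverse_add hw
    have := hSv w hw hwS
    omega
  have hu'_pos := hSu u' h1 hu'
  have hv'_pos := hSv' v' hv'p hv'
  have h2 : v' ∈ (p.dropUntil u' h1).support :=
    (hp.mem_support_dropUntil_iff h1).mpr ⟨hv'p, by omega⟩
  refine ⟨u', v', h1, h2, hu', hv', ?_, ?_, ?_, ?_, ?_, ?_, ?_,
    hp.support_takeUntil_inter_support_dropUntil_takeUntil h1 h2,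
    hp.support_dropUntil_dropUntil_inter_support_dropUntil_takeUntil h1 h2,
    hp.support_takeUntil_inter_support_dropUntil_dropUntil h1 h2 (by omega)⟩
  · rintro w hw - hwu' (hwS | hwS)
    · obtain ⟨hwp, hle⟩ := (mem_support_takeUntil_iff h1).mp hw
      have := hu'_min w ⟨hwp, hwS⟩
      exact hwu' ((List.idxOf_inj hwp).mp (by omega))
    · obtain ⟨hwp, hle⟩ := (mem_support_takeUntil_iff h1).mp hw
      have := hSv' w hwp hwS
      omega
  · rw [length_takeUntil]; exact hu'_pos.1
  · rw [length_takeUntil]; exact hu'_pos.2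
  · rintro w hw hwv' - (hwS | hwS)
    · obtain ⟨hwp, hle⟩ := hp.mem_support_dropUntil_dropUntil h1 h2 hw
      have := hSu w hwp hwS
      omega
    · obtain ⟨hwp, hle⟩ := hp.mem_support_dropUntil_dropUntil h1 h2 hw
      have := hv'_max w ⟨hwp, hwS⟩
      exact hwv' ((List.idxOf_inj hwp).mp (by omega))
  · rw [hp.length_dropUntil_dropUntil h1 h2]; omega
  · rw [hp.length_dropUntil_dropUntil h1 h2]; omega
  · rw [← append_assoc, take_spec, take_spec]

end SimpleGraph.Walk

namespace SimpleGraph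

variable {V : Type*} {G : SimpleGraph V}

theorem IsAcyclic.support_subset_of_isPath (hG : G.IsAcyclic) {a b : V} {p : G.Walk a b}
    (hp : p.IsPath) (q : G.Walk a b) : p.support ⊆ q.support := by
  classical
  have : p = q.bypass := congrArg Subtype.val ((hG.subsingleton_path a b).elim ⟨p, hp⟩ q.toPath)
  exact this ▸ q.support_bypass_subset_support

theorem Walk.exists_coe_walk_support_eq {R : G.Subgraph} {a b : V} (p : G.Walk a b)
    (hp : ∀ e ∈ p.edges, e ∈ R.edgeSet) (ha : a ∈ R.verts) (hb : b ∈ R.verts) :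
    ∃ q : R.coe.Walk ⟨a, ha⟩ ⟨b, hb⟩, q.support.map Subtype.val = p.support := by
  induction p with
  | nil => exact ⟨nil, rfl⟩
  | @cons x y z hxy p ih =>
    have hRxy : R.Adj x y := Subgraph.mem_edgeSet.mp (hp _ (by simp))
    obtain ⟨q, hq⟩ := ih (fun e he => hp e (by simp [he])) hRxy.snd_mem hb
    exact ⟨cons (show R.coe.Adj ⟨x, ha⟩ ⟨y, hRxy.snd_mem⟩ from hRxy) q, by simp [hq]⟩

theorem Walk.IsPath.notMem_of_reachable_deleteVerts {R : G.Subgraph} (hR : R.coe.IsAcyclic)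
    {a b : V} {p : G.Walk a b} (hp : p.IsPath) (hpR : ∀ e ∈ p.edges, e ∈ R.edgeSet) {D : Set V}
    {ha : a ∈ (R.deleteVerts D).verts} {hb : b ∈ (R.deleteVerts D).verts}
    (hreach : (R.deleteVerts D).coe.Reachable ⟨a, ha⟩ ⟨b, hb⟩) {x : V} (hx : x ∈ p.support) :
    x ∉ D := by
  obtain ⟨W⟩ := hreach
  obtain ⟨q, hqp⟩ := p.exists_coe_walk_support_eq hpR ha.1 hb.1
  have hq : q.IsPath := by
    rw [isPath_def, ← List.nodup_map_iff Subtype.val_injective, hqp]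
    exact hp.support_nodup
  rw [← hqp] at hx
  obtain ⟨y, hy, rfl⟩ := List.mem_map.mp hx
  let f : (R.deleteVerts D).coe →g R.coe := Subgraph.inclusion Subgraph.deleteVerts_le
  have hyW : y ∈ (W.map f).support := hR.support_subset_of_isPath hq (W.map f) hy
  rw [support_map] at hyW
  obtain ⟨z, -, rfl⟩ := List.mem_map.mp hyW
  exact z.2.2

end SimpleGraph

section Sides

variable {V : Type*} [DecidableEq V] {H : SimpleGraph V} {R : H.Subgraph} {u v w : V}
  {Q : H.Walk u v} {n : ℕ}

theorem mem_sideA_of_idxOf_lt (hw : w ∈ Q.support) (h : Q.support.idxOf w < n / 2) :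
    w ∈ sideA H R Q n :=
  Or.inl ((List.mem_take_iff_idxOf_lt hw).mpr h)

theorem mem_sideB_of_le_idxOf (hR : R.coe.IsAcyclic) (hQ : Q.IsPath) (hQR : Q.toSubgraph ≤ R)
    (hn : 1 < n) (hw : w ∈ Q.support) (h : n ≤ Q.support.idxOf w) : w ∈ sideB H R Q n := by
  have hlen : 1 < Q.support.length := by have := List.idxOf_lt_length_of_mem hw; omega
  obtain ⟨x, hxQ, hxidx⟩ : ∃ x ∈ Q.support, Q.support.idxOf x = 1 :=
    ⟨_, List.getElem_mem hlen, hQ.support_nodup.idxOf_getElem 1 hlen⟩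
  have hxD : x ∈ ({y | y ∈ Q.support.take n} \ {u} : Set V) := by
    refine ⟨(List.mem_take_iff_idxOf_lt hxQ).mpr (by omega), fun hxu => ?_⟩
    rw [Set.mem_singleton_iff.mp hxu, ← Walk.cons_tail_support, List.idxOf_cons_self] at hxidx
    omega
  refine ⟨hQR.1 (Q.mem_verts_toSubgraph.mpr hw), ?_⟩
  rintro ((hA | ⟨hwD, huD, ⟨W⟩⟩) | hT)
  · have := (List.mem_take_iff_idxOf_lt hw).mp hA
    omega
  · have hpR : ∀ e ∈ (Q.takeUntil w hw).reverse.edges, e ∈ R.edgeSet := fun e he =>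
      Subgraph.edgeSet_mono hQR (by
        rw [Walk.edges_reverse, List.mem_reverse] at he
        rw [Walk.edgeSet_toSubgraph]
        exact Q.edges_takeUntil_subset_edges hw he)
    refine (hQ.takeUntil hw).reverse.notMem_of_reachable_deleteVerts hR hpR ⟨W⟩ ?_ hxD
    rw [Walk.support_reverse, List.mem_reverse, Walk.mem_support_takeUntil_iff]
    exact ⟨hxQ, by omega⟩
  · have := (List.mem_take_iff_idxOf_lt hw).mp hT
    omega

theorem idxOf_mem_Ico_of_notMem_sides (hR : R.coe.IsAcyclic) (hQ : Q.IsPath)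
    (hQR : Q.toSubgraph ≤ R) (hn : 1 < n) (hw : w ∈ Q.support)
    (hwAB : w ∉ sideA H R Q n ∪ sideB H R Q n) : Q.support.idxOf w ∈ Set.Ico (n / 2) n := by
  exact ⟨le_of_not_gt fun h => hwAB (Or.inl (mem_sideA_of_idxOf_lt hw h)),
    lt_of_not_ge fun h => hwAB (Or.inr (mem_sideB_of_le_idxOf hR hQ hQR hn hw h))⟩

theorem Separates.exists_mem_support_of_sides {S : Set V} (hR : R.coe.IsAcyclic)
    (hQ : Q.IsPath) (hQR : Q.toSubgraph ≤ R) (hn : 1 < n) (hL : n ≤ Q.length)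
    (hS : Separates H (sideA H R Q n) (sideB H R Q n) S) : ∃ w ∈ Q.support, w ∈ S := by
  have hlen : n < Q.support.length := by rw [Walk.length_support]; omega
  obtain ⟨x, hxQ, hxidx⟩ : ∃ x ∈ Q.support, Q.support.idxOf x = n :=
    ⟨_, List.getElem_mem hlen, hQ.support_nodup.idxOf_getElem n hlen⟩
  have huA : u ∈ sideA H R Q n :=
    mem_sideA_of_idxOf_lt Q.start_mem_support (by rw [Walk.idxOf_start_support]; omega)
  obtain ⟨w, hw, hwS⟩ := hS u x (Q.takeUntil x hxQ) huA
    (mem_sideB_of_le_idxOf hR hQ hQR hn hxQ hxidx.ge)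
  exact ⟨w, Q.support_takeUntil_subset_support hxQ hw, hwS⟩

end Sides

theorem stmt9_general {V : Type*} [DecidableEq V] (H : SimpleGraph V) (Z : Set V)
    (k c : ℕ)
    (R : H.Subgraph) (hR : IsSteinerTree H Z R)
    {u v : V} (Q : H.Walk u v) (hQp : Q.IsPath) (hQR : Q.toSubgraph ≤ R)
    (hlong : 10 ^ 4 * 2 ^ (c * k) ≤ Q.length)
    (Su Sv : Set V)
    (hSuDisj : Su ⊆ (sideA H R Q (100 * 2 ^ (c * k)) ∪ sideB H R Q (100 * 2 ^ (c * k)))ᶜ)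
    (hSuSep : Separates H (sideA H R Q (100 * 2 ^ (c * k)))
      (sideB H R Q (100 * 2 ^ (c * k))) Su)
    (hSvDisj : Sv ⊆ (sideA H R Q.reverse (100 * 2 ^ (c * k))
      ∪ sideB H R Q.reverse (100 * 2 ^ (c * k)))ᶜ)
    (hSvSep : Separates H (sideA H R Q.reverse (100 * 2 ^ (c * k)))
      (sideB H R Q.reverse (100 * 2 ^ (c * k))) Sv) :
    ∃ (u' v' : V) (h1 : u' ∈ Q.support) (h2 : v' ∈ (Q.dropUntil u' h1).support),
      u' ∈ Su ∧ v' ∈ Sv ∧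
      (∀ w ∈ (Q.takeUntil u' h1).support, w ≠ u → w ≠ u' → w ∉ Su ∪ Sv) ∧
      50 * 2 ^ (c * k) ≤ (Q.takeUntil u' h1).length + 1 ∧
      (Q.takeUntil u' h1).length + 1 ≤ 100 * 2 ^ (c * k) ∧
      (∀ w ∈ ((Q.dropUntil u' h1).dropUntil v' h2).support,
        w ≠ v' → w ≠ v → w ∉ Su ∪ Sv) ∧
      50 * 2 ^ (c * k) ≤ ((Q.dropUntil u' h1).dropUntil v' h2).length + 1 ∧
      ((Q.dropUntil u' h1).dropUntil v' h2).length + 1 ≤ 100 * 2 ^ (c * k) ∧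
      Q = ((Q.takeUntil u' h1).append
            ((Q.dropUntil u' h1).takeUntil v' h2)).append
            ((Q.dropUntil u' h1).dropUntil v' h2) ∧
      {w : V | w ∈ (Q.takeUntil u' h1).support} ∩
        {w : V | w ∈ ((Q.dropUntil u' h1).takeUntil v' h2).support} = {u'} ∧
      {w : V | w ∈ ((Q.dropUntil u' h1).dropUntil v' h2).support} ∩
        {w : V | w ∈ ((Q.dropUntil u' h1).takeUntil v' h2).support} = {v'} ∧
      {w : V | w ∈ (Q.takeUntil u' h1).support} ∩
        {w : V | w ∈ ((Q.dropUntil u' h1).dropUntil v' h2).support} = ∅ := by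
  have hAc : R.coe.IsAcyclic := hR.1.isAcyclic
  have hpow : 1 ≤ 2 ^ (c * k) := Nat.one_le_two_pow
  have hn : 1 < 100 * 2 ^ (c * k) := by omega
  have hQp' : Q.reverse.IsPath := hQp.reverse
  have hQR' : Q.reverse.toSubgraph ≤ R := by rwa [Walk.toSubgraph_reverse]
  refine hQp.exists_three_parts (lo := 50 * 2 ^ (c * k)) (hi := 100 * 2 ^ (c * k))
    (fun w hw hwS => ?_) (fun w hw hwS => ?_) (by omega)
    (hSuSep.exists_mem_support_of_sides hAc hQp hQR hn (by omega)) ?_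
  · have := idxOf_mem_Ico_of_notMem_sides hAc hQp hQR hn hw (hSuDisj hwS)
    simp only [Set.mem_Ico] at this
    omega
  · have hw' : w ∈ Q.reverse.support := by rwa [Walk.support_reverse, List.mem_reverse]
    have := idxOf_mem_Ico_of_notMem_sides hAc hQp' hQR' hn hw' (hSvDisj hwS)
    simp only [Set.mem_Ico] at this
    omega
  · obtain ⟨w, hw, hwS⟩ := hSvSep.exists_mem_support_of_sides hAc hQp' hQR' hn
      (by rw [Walk.length_reverse]; omega)
    exact ⟨w, by rwa [Walk.support_reverse, List.mem_reverse] at hw, hwS⟩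

/-- Lemma "threeParts": given a Steiner tree `R`, a long maximal degree-2 path `Q` of `R`
with endpoints `u, v`, and separators `Su` (for `A_{R,Q,u}`/`B_{R,Q,u}`) and `Sv` (for
`A_{R,Q,v}`/`B_{R,Q,v}`, defined via the reversed path), both disjoint from the sets they
separate, there exist `u' ∈ Su ∩ V(Q)` and `v' ∈ Sv ∩ V(Q)` such that: (1) the subpath
`P_{u,u'}` of `Q` has no internal vertex of `Su ∪ Sv` and has between `α_pat(k)/2` and
`α_pat(k)` vertices; (2) likewise for the subpath `P_{v',v}`; and (3) `Q` decomposes as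
`P_{u,u'} − P_{u',v'} − P_{v',v}`, with consecutive parts meeting exactly in `u'`
(resp. `v'`) and the two extreme parts disjoint. -/
theorem stmt9 {V : Type*} [Fintype V] [DecidableEq V] (H : SimpleGraph V) (Z : Set V)
    (k c : ℕ) (hk : 1 ≤ k) (hc : 1 ≤ c)
    (R : H.Subgraph) (hR : IsSteinerTree H Z R)
    {u v : V} (Q : H.Walk u v) (hQp : Q.IsPath) (hQR : Q.toSubgraph ≤ R) (huv : u ≠ v)
    (hu : degN R u = 1 ∨ 3 ≤ degN R u) (hv : degN R v = 1 ∨ 3 ≤ degN R v)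
    (hnear : ∀ w ∈ Q.support, w ≠ u → w ≠ v → degN R w < 3)
    (hlong : 10 ^ 4 * 2 ^ (c * k) ≤ Q.length)
    (Su Sv : Set V)
    (hSuDisj : Su ⊆ (sideA H R Q (100 * 2 ^ (c * k)) ∪ sideB H R Q (100 * 2 ^ (c * k)))ᶜ)
    (hSuSep : Separates H (sideA H R Q (100 * 2 ^ (c * k)))
      (sideB H R Q (100 * 2 ^ (c * k))) Su)
    (hSvDisj : Sv ⊆ (sideA H R Q.reverse (100 * 2 ^ (c * k))
      ∪ sideB H R Q.reverse (100 * 2 ^ (c * k)))ᶜ)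
    (hSvSep : Separates H (sideA H R Q.reverse (100 * 2 ^ (c * k)))
      (sideB H R Q.reverse (100 * 2 ^ (c * k))) Sv) :
    ∃ (u' v' : V) (h1 : u' ∈ Q.support) (h2 : v' ∈ (Q.dropUntil u' h1).support),
      u' ∈ Su ∧ v' ∈ Sv ∧
      (∀ w ∈ (Q.takeUntil u' h1).support, w ≠ u → w ≠ u' → w ∉ Su ∪ Sv) ∧
      50 * 2 ^ (c * k) ≤ (Q.takeUntil u' h1).length + 1 ∧
      (Q.takeUntil u' h1).length + 1 ≤ 100 * 2 ^ (c * k) ∧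
      (∀ w ∈ ((Q.dropUntil u' h1).dropUntil v' h2).support,
        w ≠ v' → w ≠ v → w ∉ Su ∪ Sv) ∧
      50 * 2 ^ (c * k) ≤ ((Q.dropUntil u' h1).dropUntil v' h2).length + 1 ∧
      ((Q.dropUntil u' h1).dropUntil v' h2).length + 1 ≤ 100 * 2 ^ (c * k) ∧
      Q = ((Q.takeUntil u' h1).append
            ((Q.dropUntil u' h1).takeUntil v' h2)).append
            ((Q.dropUntil u' h1).dropUntil v' h2) ∧
      {w : V | w ∈ (Q.takeUntil u' h1).support} ∩
        {w : V | w ∈ ((Q.dropUntil u' h1).takeUntil v' h2).support} = {u'} ∧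
      {w : V | w ∈ ((Q.dropUntil u' h1).dropUntil v' h2).support} ∩
        {w : V | w ∈ ((Q.dropUntil u' h1).takeUntil v' h2).support} = {v'} ∧
      {w : V | w ∈ (Q.takeUntil u' h1).support} ∩
        {w : V | w ∈ ((Q.dropUntil u' h1).dropUntil v' h2).support} = ∅ :=
  stmt9_general H Z k c R hR Q hQp hQR hlong Su Sv hSuDisj hSuSep hSvDisj hSvSep
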